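/- arXiv:1311.1468 — 3 statements merged into one kernel-verified Lean document; each statement's English description precedes it below -/
import Mathlib

section
/- Every k-network in a k₂-space X is a Pytkeev network for X. -/
open Set Filter Topology TopologicalSpace

/-- A set `A` accumulates at `x` if every neighborhood of `x` contains
infinitely many points of `A`. -/
def AccumulatesAt {X : Type*} [TopologicalSpace X] (A : Set X) (x : X) : Prop :=
  ∀ U ∈ 𝓝 x, (U ∩ A).Infinite

/-- `𝒩` is a network: for each point and open neighborhood there is a member of `𝒩`
containing the point and contained in the neighborhood. -/
def IsNetwork {X : Type*} [TopologicalSpace X] (𝒩 : Set (Set X)) : Prop :=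
  ∀ (x : X) (U : Set X), IsOpen U → x ∈ U → ∃ N ∈ 𝒩, x ∈ N ∧ N ⊆ U

/-- `𝒩` is a Pytkeev network. -/
def IsPytkeevNetwork {X : Type*} [TopologicalSpace X] (𝒩 : Set (Set X)) : Prop :=
  IsNetwork 𝒩 ∧ ∀ (x : X) (U : Set X), IsOpen U → x ∈ U →
    ∀ A : Set X, AccumulatesAt A x → ∃ N ∈ 𝒩, N ⊆ U ∧ (N ∩ A).Infinite

/-- `𝒩` is a k-network. -/
def IsKNetwork {X : Type*} [TopologicalSpace X] (𝒩 : Set (Set X)) : Prop :=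
  ∀ (U K : Set X), IsOpen U → IsCompact K → K ⊆ U →
    ∃ F ⊆ 𝒩, F.Finite ∧ K ⊆ ⋃₀ F ∧ ⋃₀ F ⊆ U

/-!
Let `A` accumulate at `x ∈ U` with `U` open. The set `D = (A \ {x}) ∪ Uᶜ` is not closed, as `x`
lies in its closure but not in it, so the k₂ property yields a compact Hausdorff `K` in which
`D ∩ K` is not closed. An accumulation point `z` of `D ∩ K` outside it lies in `U` and
accumulates `A \ {x}`; a compact neighbourhood of `z` in `K` inside `U` then meets `A` in an
infinite set `C`. A finite subfamily of the k-network covering `C` inside `U` has a member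
meeting `A` infinitely often.
-/

def IsK₂Space (X : Type*) [TopologicalSpace X] : Prop :=
  ∀ A : Set X, ¬ IsClosed A → ∃ K : Set X, IsCompact K ∧ T2Space ↥K ∧
    ¬ IsClosed ((Subtype.val ⁻¹' A : Set ↥K))

section

variable {X : Type*} [TopologicalSpace X]

theorem IsKNetwork.isNetwork {𝒩 : Set (Set X)} (h : IsKNetwork 𝒩) : IsNetwork 𝒩 := by
  intro x U hU hxU
  obtain ⟨F, hF𝒩, -, hxF, hFU⟩ := h U {x} hU isCompact_singleton (singleton_subset_iff.mpr hxU)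
  obtain ⟨N, hNF, hxN⟩ := hxF (mem_singleton x)
  exact ⟨N, hF𝒩 hNF, hxN, (subset_sUnion_of_mem hNF).trans hFU⟩

theorem IsKNetwork.exists_mem_subset_inter_infinite {𝒩 : Set (Set X)} (h : IsKNetwork 𝒩)
    {U C B : Set X} (hU : IsOpen U) (hC : IsCompact C) (hCU : C ⊆ U) (hCB : (C ∩ B).Infinite) :
    ∃ N ∈ 𝒩, N ⊆ U ∧ (N ∩ B).Infinite := by
  obtain ⟨F, hF𝒩, hF, hCF, hFU⟩ := h U C hU hC hCU
  have hCB_sub : C ∩ B ⊆ ⋃ N ∈ F, N ∩ B := by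
    rintro y ⟨hyC, hyB⟩
    obtain ⟨N, hNF, hyN⟩ := hCF hyC
    exact mem_biUnion hNF ⟨hyN, hyB⟩
  by_contra! hfin
  refine hCB ((hF.biUnion fun N hN => ?_).subset hCB_sub)
  exact hfin N (hF𝒩 hN) ((subset_sUnion_of_mem hN).trans hFU)

theorem AccumulatesAt.not_isClosed_diff_union_compl {A U : Set X} {x : X}
    (hA : AccumulatesAt A x) (hxU : x ∈ U) : ¬ IsClosed (A \ {x} ∪ Uᶜ) := by
  intro hD
  have hx : x ∈ closure (A \ {x}) := mem_closure_iff_nhds.mpr fun t ht => by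
    rw [← inter_sdiff_assoc]
    exact ((hA t ht).sdiff (finite_singleton x)).nonempty
  rcases hD.closure_subset (closure_mono subset_union_left hx) with hxA | hxU'
  · exact hxA.2 rfl
  · exact hxU' hxU

theorem AccPt.exists_isCompact_subset_inter_infinite [T1Space X] [LocallyCompactSpace X]
    {s V : Set X} {z : X} (h : AccPt z (𝓟 s)) (hV : V ∈ 𝓝 z) :
    ∃ C ⊆ V, IsCompact C ∧ (C ∩ s).Infinite := by
  obtain ⟨C, hC, hCV, hCc⟩ := local_compact_nhds hV
  exact ⟨C, hCV, hCc, Set.Infinite.of_accPt (h.nhds_inter hC)⟩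

theorem IsK₂Space.exists_isCompact_subset_inter_infinite (hk2 : IsK₂Space X) {U B : Set X}
    (hU : IsOpen U) (hD : ¬ IsClosed (B ∪ Uᶜ)) :
    ∃ C ⊆ U, IsCompact C ∧ (C ∩ B).Infinite := by
  obtain ⟨K, hK, _, hKD⟩ := hk2 _ hD
  have : CompactSpace K := isCompact_iff_compactSpace.mp hK
  obtain ⟨z, hzD, hzD'⟩ : ∃ z : K, AccPt z (𝓟 (Subtype.val ⁻¹' (B ∪ Uᶜ))) ∧
      z.val ∉ B ∪ Uᶜ := by
    simpa [isClosed_iff_accPt] using hKD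
  have hzU : z.val ∈ U := not_not.mp fun h => hzD' (Or.inr h)
  have hUc : IsClosed (Subtype.val ⁻¹' Uᶜ : Set K) :=
    hU.isClosed_compl.preimage continuous_subtype_val
  -- `z` is not an accumulation point of the closed set `Uᶜ ∩ K`, which does not contain it.
  have hzB : AccPt z (𝓟 (Subtype.val ⁻¹' B : Set K)) := by
    rw [preimage_union, ← sup_principal, accPt_sup] at hzD
    exact hzD.resolve_right fun h => isClosed_iff_accPt.mp hUc z h hzU
  obtain ⟨C, hCU, hC, hCB⟩ := hzB.exists_isCompact_subset_inter_infinite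
    ((hU.preimage continuous_subtype_val).mem_nhds hzU)
  refine ⟨Subtype.val '' C, image_subset_iff.mpr hCU, hC.image continuous_subtype_val, ?_⟩
  refine (hCB.image Subtype.val_injective.injOn).mono ?_
  rintro _ ⟨y, ⟨hyC, hyB⟩, rfl⟩
  exact ⟨mem_image_of_mem _ hyC, hyB⟩

end

/-- Every k-network in a k₂-space is a Pytkeev network. -/
theorem kNetwork_isPytkeevNetwork_of_k2 {X : Type*} [TopologicalSpace X]
    (hk2 : ∀ A : Set X, ¬ IsClosed A → ∃ K : Set X, IsCompact K ∧ T2Space ↥K ∧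
      ¬ IsClosed ((Subtype.val ⁻¹' A : Set ↥K)))
    (𝒩 : Set (Set X)) (h : IsKNetwork 𝒩) :
    IsPytkeevNetwork 𝒩 := by
  refine ⟨h.isNetwork, fun x U hU hxU A hA => ?_⟩
  obtain ⟨C, hCU, hC, hCA⟩ := IsK₂Space.exists_isCompact_subset_inter_infinite hk2 hU
    (hA.not_isClosed_diff_union_compl hxU)
  obtain ⟨N, hN, hNU, hNA⟩ := h.exists_mem_subset_inter_infinite hU hC hCU hCA
  exact ⟨N, hN, hNU, hNA.mono (inter_subset_inter_right N sdiff_subset)⟩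
end

section
/- If a Hausdorff topological space X has a countable Pytkeev network, then the hyperspace exp(X) of nonempty compact subsets of X with the Vietoris topology has a countable Pytkeev network. -/
open Set Filter Topology TopologicalSpace

/-- The hyperspace of nonempty compact subsets of `X`. -/
def NonemptyCompactSubsets (X : Type*) [TopologicalSpace X] : Type _ :=
  {K : Set X // IsCompact K ∧ K.Nonempty}

/-- The Vietoris topology on the hyperspace of nonempty compact subsets. -/
def vietorisTopology (X : Type*) [TopologicalSpace X] :
    TopologicalSpace (NonemptyCompactSubsets X) :=
  TopologicalSpace.generateFrom
    ({S | ∃ U : Set X, IsOpen U ∧ S = {K : NonemptyCompactSubsets X | K.1 ⊆ U}} ∪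
     {S | ∃ U : Set X, IsOpen U ∧ S = {K : NonemptyCompactSubsets X | (K.1 ∩ U).Nonempty}})


/-!
Enumerate the countable Pytkeev network as `e 0, e 1, …`. For open `U`, the finite unions
`chain e 𝒩 U t` of those `e s ⊆ U` with `s ≤ t` increase with `t` and eventually contain every
compact subset of `U`. Hence a compact `𝒦` in a basic Vietoris set `⟨W; V₁, …, Vₙ⟩` lies in
`⟨chain W t; chain (V₁ ∩ W) t, …, chain (Vₙ ∩ W) t⟩ ⊆ ⟨W; V₁, …, Vₙ⟩` for large `t`, and these
sets form a countable family. Suppose `𝒜` accumulates at `𝒦` but meets each of them in a finite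
set. Each `L ∈ 𝒜` near `𝒦` enters the sequence at some step `t + 1` because of a single point
`x L`: a point of `L` outside `chain W t`, or a point of `L ∩ Qᵢ` outside `chain (Vᵢ ∩ W) t`,
where the open `Qᵢ ⊆ Vᵢ ∩ W` meets `𝒦` and its closure meets `𝒦` only inside `Vᵢ ∩ W`
(Hausdorffness). The witnesses of one kind accumulate at a point `y ∈ 𝒦` of the corresponding
open set `U`, and the Pytkeev property at `y` puts infinitely many of them into a single
`chain U t`, whereas only the finitely many `L` of the `t`-th set have their witness there.
-/

theorem forall_mem_inter_infinite_iff {X : Type*} {l : Filter X} {A : Set X} :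
    (∀ U ∈ l, (U ∩ A).Infinite) ↔ ¬Disjoint l (𝓟 A ⊓ cofinite) := by
  rw [← disjoint_assoc, disjoint_cofinite_right,
    (l.basis_sets.inf_principal A).exists_iff fun {s t} (hst : s ⊆ t) (ht : t.Finite) =>
      ht.subset hst]
  simp only [not_exists, not_and, id]
  rfl

section Accumulation

variable {X : Type*} [TopologicalSpace X] {A S : Set X} {x : X}

theorem AccumulatesAt.inter_mem_nhds (h : AccumulatesAt A x) (hS : S ∈ 𝓝 x) :
    AccumulatesAt (A ∩ S) x := fun U hU =>
  (h (U ∩ S) (inter_mem hU hS)).mono <| by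
    rintro y ⟨⟨hyU, hyS⟩, hyA⟩
    exact ⟨hyU, hyA, hyS⟩

theorem AccumulatesAt.diff_of_finite_inter (h : AccumulatesAt A x) (hS : (A ∩ S).Finite) :
    AccumulatesAt (A \ S) x := fun U hU =>
  ((h U hU).sdiff hS).mono <| by
    rintro y ⟨⟨hyU, hyA⟩, hyS⟩
    exact ⟨hyU, hyA, fun hy => hyS ⟨hyA, hy⟩⟩

theorem AccumulatesAt.mem_closure (h : AccumulatesAt A x) : x ∈ closure A :=
  mem_closure_iff_nhds.2 fun U hU => (h U hU).nonempty

theorem AccumulatesAt.exists_inter_preimage {ι : Type*} {f : X → ι} {I : Set ι}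
    (h : AccumulatesAt A x) (hI : I.Finite) (hf : MapsTo f A I) :
    ∃ i ∈ I, AccumulatesAt (A ∩ f ⁻¹' {i}) x := by
  by_contra! hfin
  simp only [AccumulatesAt, not_forall, Set.not_infinite] at hfin
  choose! U hU hUfin using hfin
  refine h (⋂ i ∈ I, U i) ((biInter_mem hI).2 hU) ((hI.biUnion hUfin).subset ?_)
  rintro y ⟨hyU, hyA⟩
  exact mem_biUnion (hf hyA) ⟨mem_iInter₂.1 hyU _ (hf hyA), hyA, rfl⟩

theorem IsCompact.exists_accumulatesAt {K : Set X} (hK : IsCompact K)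
    (h : ∀ U ∈ 𝓝ˢ K, (U ∩ A).Infinite) : ∃ y ∈ K, AccumulatesAt A y := by
  simp only [AccumulatesAt, forall_mem_inter_infinite_iff] at h ⊢
  by_contra! hno
  exact h (hK.disjoint_nhdsSet_left.2 hno)

theorem Set.Infinite.exists_accumulatesAt_of_subset {K : Set X} (hA : A.Infinite)
    (hK : IsCompact K) (hAK : A ⊆ K) : ∃ y ∈ K, AccumulatesAt A y :=
  hK.exists_accumulatesAt fun U hU => by
    rwa [inter_eq_right.2 (hAK.trans (subset_of_mem_nhdsSet hU))]

theorem IsCompact.exists_isOpen_closure_inter_subset [T2Space X] {K U : Set X}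
    (hK : IsCompact K) (hU : IsOpen U) (hx : x ∈ K ∩ U) :
    ∃ O, IsOpen O ∧ O ⊆ U ∧ x ∈ O ∧ closure O ∩ K ⊆ U := by
  obtain ⟨G, O, hG, hO, hKG, hxO, hGO⟩ :=
    (hK.diff hU).separation_of_notMem fun hx' => hx'.2 hx.2
  refine ⟨O ∩ U, hO.inter hU, inter_subset_right, ⟨hxO, hx.2⟩, fun y ⟨hyO, hyK⟩ => ?_⟩
  by_contra hyU
  exact disjoint_left.1 (hGO.symm.closure_left hG) (closure_mono inter_subset_left hyO)
    (hKG ⟨hyK, hyU⟩)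

end Accumulation

section Chain

variable {X : Type*}

def finiteUnions (𝒩 : Set (Set X)) : Set (Set X) :=
  sUnion '' {G | G.Finite ∧ G ⊆ 𝒩}

theorem Set.Countable.finiteUnions {𝒩 : Set (Set X)} (h : 𝒩.Countable) :
    (finiteUnions 𝒩).Countable :=
  (countable_ofPred_finite_subset h).image _

def chain (e : ℕ → Set X) (𝒩 : Set (Set X)) (U : Set X) (t : ℕ) : Set X :=
  ⋃₀ (e '' {s | s ≤ t ∧ e s ∈ 𝒩 ∧ e s ⊆ U})

variable {e : ℕ → Set X} {𝒩 : Set (Set X)} {U : Set X}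

theorem chain_mem_finiteUnions (t : ℕ) : chain e 𝒩 U t ∈ finiteUnions 𝒩 :=
  ⟨_, ⟨((finite_Iic t).subset fun _ hs => hs.1).image e,
    image_subset_iff.2 fun _ hs => hs.2.1⟩, rfl⟩

theorem chain_subset (t : ℕ) : chain e 𝒩 U t ⊆ U :=
  sUnion_subset <| forall_mem_image.2 fun _ hs => hs.2.2

theorem chain_mono : Monotone (chain e 𝒩 U) := fun _ _ hst =>
  sUnion_mono (image_mono fun _ hs => ⟨hs.1.trans hst, hs.2⟩)

theorem exists_subset_chain (he : 𝒩 ⊆ range e) {N : Set X} (hN : N ∈ 𝒩) (hNU : N ⊆ U) :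
    ∃ t, N ⊆ chain e 𝒩 U t := by
  obtain ⟨t, rfl⟩ := he hN
  exact ⟨t, subset_sUnion_of_mem ⟨t, ⟨le_rfl, hN, hNU⟩, rfl⟩⟩

variable [TopologicalSpace X] (h𝒩 : IsPytkeevNetwork 𝒩) (he : 𝒩 ⊆ range e) (hU : IsOpen U)
include h𝒩 he hU

theorem IsPytkeevNetwork.exists_mem_chain {x : X} (hx : x ∈ U) : ∃ t, x ∈ chain e 𝒩 U t := by
  obtain ⟨N, hN, hxN, hNU⟩ := h𝒩.1 x U hU hx
  obtain ⟨t, ht⟩ := exists_subset_chain he hN hNU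
  exact ⟨t, ht hxN⟩

theorem IsPytkeevNetwork.finite_fiber {α : Type*} {S : Set α} {p : α → X} (hpU : MapsTo p S U)
    (hfin : ∀ t, {a ∈ S | p a ∈ chain e 𝒩 U t}.Finite) (x : X) : {a ∈ S | p a = x}.Finite := by
  by_cases hx : x ∈ U
  · obtain ⟨t, ht⟩ := h𝒩.exists_mem_chain he hU hx
    exact (hfin t).subset fun a ⟨ha, hax⟩ => ⟨ha, hax ▸ ht⟩
  · exact finite_empty.subset fun a ⟨ha, hax⟩ => hx (hax ▸ hpU ha)

theorem IsPytkeevNetwork.not_accumulatesAt_image {α : Type*} {S : Set α} {p : α → X}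
    (hfin : ∀ t, {a ∈ S | p a ∈ chain e 𝒩 U t}.Finite) {y : X} (hy : y ∈ U) :
    ¬AccumulatesAt (p '' S) y := fun hacc => by
  obtain ⟨N, hN, hNU, hinf⟩ := h𝒩.2 y U hU hy _ hacc
  obtain ⟨t, ht⟩ := exists_subset_chain he hN hNU
  refine hinf (((hfin t).image p).subset ?_)
  rintro _ ⟨hxN, a, ha, rfl⟩
  exact ⟨a, ⟨ha, ht hxN⟩, rfl⟩

theorem IsPytkeevNetwork.exists_subset_chain_of_isCompact {K : Set X} (hK : IsCompact K)
    (hKU : K ⊆ U) : ∃ t, K ⊆ chain e 𝒩 U t := by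
  by_contra! hout
  choose x hxK hx using fun t => not_subset.1 (hout t)
  have hfin : ∀ t, {s ∈ univ | x s ∈ chain e 𝒩 U t}.Finite := fun t =>
    (finite_Iio t).subset fun s ⟨_, hs⟩ => lt_of_not_ge fun hts => hx s (chain_mono hts hs)
  have hinf : (range x).Infinite := fun hfin' => infinite_univ (α := ℕ) <| by
    simpa using hfin'.preimage' fun y _ =>
      (h𝒩.finite_fiber he hU (fun s _ => hKU (hxK s)) hfin y).subset fun s hs => ⟨mem_univ s, hs⟩
  obtain ⟨y, hyK, hy⟩ := hinf.exists_accumulatesAt_of_subset hK (range_subset_iff.2 hxK)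
  exact h𝒩.not_accumulatesAt_image he hU hfin (hKU hyK) (image_univ ▸ hy)

end Chain

section Hyperspace

variable {X : Type*} [TopologicalSpace X]

attribute [local instance] vietorisTopology

/-- The basic Vietoris set `⟨U₁, …, Uₙ⟩` is `vietorisBasic (U₁ ∪ … ∪ Uₙ) {U₁, …, Uₙ}`. -/
def vietorisBasic (W : Set X) (𝒱 : Set (Set X)) : Set (NonemptyCompactSubsets X) :=
  {L | L.1 ⊆ W ∧ ∀ v ∈ 𝒱, (L.1 ∩ v).Nonempty}

theorem isOpen_vietorisBasic {W : Set X} {𝒱 : Set (Set X)} (hW : IsOpen W) (h𝒱 : 𝒱.Finite)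
    (h𝒱o : ∀ v ∈ 𝒱, IsOpen v) : IsOpen (vietorisBasic W 𝒱) := by
  have : vietorisBasic W 𝒱 = {L | L.1 ⊆ W} ∩
      ⋂ v ∈ 𝒱, {L : NonemptyCompactSubsets X | (L.1 ∩ v).Nonempty} := by
    ext L
    simp [vietorisBasic]
  rw [this]
  exact (isOpen_generateFrom_of_mem (Or.inl ⟨W, hW, rfl⟩)).inter
    (h𝒱.isOpen_biInter fun v hv => isOpen_generateFrom_of_mem (Or.inr ⟨v, h𝒱o v hv, rfl⟩))

theorem exists_vietorisBasic_subset {𝒪 : Set (NonemptyCompactSubsets X)} (h𝒪 : IsOpen 𝒪)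
    {𝒦 : NonemptyCompactSubsets X} (h𝒦 : 𝒦 ∈ 𝒪) :
    ∃ W 𝒱, IsOpen W ∧ 𝒱.Finite ∧ (∀ v ∈ 𝒱, IsOpen v) ∧
      𝒦 ∈ vietorisBasic W 𝒱 ∧ vietorisBasic W 𝒱 ⊆ 𝒪 := by
  obtain ⟨_, ⟨f, ⟨hf, hfsub⟩, rfl⟩, h𝒦f, hf𝒪⟩ :=
    (isTopologicalBasis_of_subbasis rfl).isOpen_iff.1 h𝒪 𝒦 h𝒦
  suffices ∃ W 𝒱, IsOpen W ∧ 𝒱.Finite ∧ (∀ v ∈ 𝒱, IsOpen v) ∧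
      𝒦 ∈ vietorisBasic W 𝒱 ∧ vietorisBasic W 𝒱 ⊆ ⋂₀ f by
    obtain ⟨W, 𝒱, hW, h𝒱, h𝒱o, h𝒦W, hsub⟩ := this
    exact ⟨W, 𝒱, hW, h𝒱, h𝒱o, h𝒦W, hsub.trans hf𝒪⟩
  clear hf𝒪
  induction f, hf using Set.Finite.induction_on with
  | empty => exact ⟨univ, ∅, isOpen_univ, finite_empty, by simp, by simp [vietorisBasic], by simp⟩
  | @insert S f _ _ ih =>
    simp only [sInter_insert] at h𝒦f ⊢
    obtain ⟨W, 𝒱, hW, h𝒱, h𝒱o, h𝒦W, hsub⟩ :=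
      ih (fun T hT => hfsub (mem_insert_of_mem S hT)) h𝒦f.2
    rcases hfsub (mem_insert S f) with ⟨U, hU, rfl⟩ | ⟨U, hU, rfl⟩
    · exact ⟨W ∩ U, 𝒱, hW.inter hU, h𝒱, h𝒱o, ⟨subset_inter h𝒦W.1 h𝒦f.1, h𝒦W.2⟩,
        fun L hL => ⟨hL.1.trans inter_subset_right, hsub ⟨hL.1.trans inter_subset_left, hL.2⟩⟩⟩
    · exact ⟨W, insert U 𝒱, hW, h𝒱.insert U, forall_mem_insert.2 ⟨hU, h𝒱o⟩,
        ⟨h𝒦W.1, forall_mem_insert.2 ⟨h𝒦f.1, h𝒦W.2⟩⟩,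
        fun L hL => ⟨hL.2 U (mem_insert U 𝒱),
          hsub ⟨hL.1, fun v hv => hL.2 v (mem_insert_of_mem U hv)⟩⟩⟩

theorem AccumulatesAt.exists_accumulatesAt_image {𝒜 : Set (NonemptyCompactSubsets X)}
    {𝒦 : NonemptyCompactSubsets X} (h : AccumulatesAt 𝒜 𝒦) {p : NonemptyCompactSubsets X → X}
    (hp : ∀ L ∈ 𝒜, p L ∈ L.1) (hfib : ∀ x, {L ∈ 𝒜 | p L = x}.Finite) :
    ∃ y ∈ 𝒦.1, AccumulatesAt (p '' 𝒜) y := by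
  refine 𝒦.2.1.exists_accumulatesAt fun U hU hfin => ?_
  obtain ⟨V, hV, hKV, hVU⟩ := mem_nhdsSet_iff_exists.1 hU
  refine h _ ((isOpen_vietorisBasic hV finite_empty (by simp)).mem_nhds ⟨hKV, by simp⟩)
    ((hfin.biUnion fun x _ => hfib x).subset ?_)
  rintro L ⟨hLV, hL⟩
  exact mem_biUnion ⟨hVU (hLV.1 (hp L hL)), L, hL, rfl⟩ ⟨hL, rfl⟩

def hyperspaceNetwork (𝒩 : Set (Set X)) : Set (Set (NonemptyCompactSubsets X)) :=
  (fun F => vietorisBasic (⋃₀ F) F) '' {F | F.Finite ∧ F ⊆ 𝒩}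

theorem Set.Countable.hyperspaceNetwork {𝒩 : Set (Set X)} (h : 𝒩.Countable) :
    (hyperspaceNetwork 𝒩).Countable :=
  (countable_ofPred_finite_subset h).image _

def chainBasic (e : ℕ → Set X) (𝒩 : Set (Set X)) (W : Set X) (𝒱 : Set (Set X))
    (Q : Set X → Set X) (t : ℕ) : Set (NonemptyCompactSubsets X) :=
  {L | L.1 ⊆ chain e 𝒩 W t ∧ ∀ v ∈ 𝒱, (L.1 ∩ Q v ∩ chain e 𝒩 (v ∩ W) t).Nonempty}

variable {e : ℕ → Set X} {𝒩 : Set (Set X)} {W : Set X} {𝒱 : Set (Set X)} {Q : Set X → Set X}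

theorem chainBasic_mono : Monotone (chainBasic e 𝒩 W 𝒱 Q) := fun _ _ hst _ hL =>
  ⟨hL.1.trans (chain_mono hst),
    fun v hv => (hL.2 v hv).mono (inter_subset_inter_right _ (chain_mono hst))⟩

theorem exists_hyperspaceNetwork_between (h𝒱 : 𝒱.Finite) (t : ℕ) :
    ∃ 𝒩' ∈ hyperspaceNetwork (finiteUnions 𝒩),
      chainBasic e 𝒩 W 𝒱 Q t ⊆ 𝒩' ∧ 𝒩' ⊆ vietorisBasic W 𝒱 := by
  set F := insert (chain e 𝒩 W t) ((fun v => chain e 𝒩 (v ∩ W) t) '' 𝒱)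
  refine ⟨vietorisBasic (⋃₀ F) F, ⟨F, ⟨(h𝒱.image _).insert _, ?_⟩, rfl⟩, ?_, ?_⟩
  · rintro _ (rfl | ⟨v, -, rfl⟩) <;> exact chain_mem_finiteUnions t
  · rintro L ⟨hLW, hLv⟩
    refine ⟨hLW.trans (subset_sUnion_of_mem (mem_insert _ _)), ?_⟩
    rintro _ (rfl | ⟨v, hv, rfl⟩)
    · obtain ⟨x, hx⟩ := L.2.2
      exact ⟨x, hx, hLW hx⟩
    · exact (hLv v hv).mono (inter_subset_inter_left _ inter_subset_left)
  · rintro L ⟨hLF, hLv⟩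
    refine ⟨hLF.trans (sUnion_subset ?_), fun v hv =>
      (hLv _ (mem_insert_of_mem _ ⟨v, hv, rfl⟩)).mono
        (inter_subset_inter_right _ ((chain_subset t).trans inter_subset_left))⟩
    rintro _ (rfl | ⟨v, -, rfl⟩)
    · exact chain_subset t
    · exact (chain_subset t).trans inter_subset_right

theorem exists_witness_of_notMem_chainBasic {L : NonemptyCompactSubsets X} (hLW : L.1 ⊆ W)
    (hLQ : ∀ v ∈ 𝒱, (L.1 ∩ Q v).Nonempty) {t : ℕ} (hLt : L ∉ chainBasic e 𝒩 W 𝒱 Q t) :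
    ∃ P ∈ insert (W, W) ((fun v => (v ∩ W, Q v)) '' 𝒱), ∃ x ∈ L.1 ∩ P.2, x ∉ chain e 𝒩 P.1 t := by
  simp only [chainBasic, mem_ofPred_eq, not_and_or, not_subset, not_forall] at hLt
  rcases hLt with ⟨x, hxL, hx⟩ | ⟨v, hv, hmiss⟩
  · exact ⟨(W, W), mem_insert _ _, x, ⟨hxL, hLW hxL⟩, hx⟩
  · obtain ⟨x, hxL, hxQ⟩ := hLQ v hv
    exact ⟨(v ∩ W, Q v), mem_insert_of_mem _ ⟨v, hv, rfl⟩, x, ⟨hxL, hxQ⟩,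
      fun hx => hmiss ⟨x, ⟨hxL, hxQ⟩, hx⟩⟩

variable (h𝒩 : IsPytkeevNetwork 𝒩) (he : 𝒩 ⊆ range e)
include h𝒩 he

theorem IsPytkeevNetwork.exists_mem_chainBasic (hW : IsOpen W) (h𝒱 : 𝒱.Finite)
    (h𝒱o : ∀ v ∈ 𝒱, IsOpen v) (hQ : ∀ v ∈ 𝒱, Q v ⊆ v ∩ W) {L : NonemptyCompactSubsets X}
    (hLW : L.1 ⊆ W) (hLQ : ∀ v ∈ 𝒱, (L.1 ∩ Q v).Nonempty) :
    ∃ t, L ∈ chainBasic e 𝒩 W 𝒱 Q t := by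
  have hcover : ∀ᶠ t in atTop, L.1 ⊆ chain e 𝒩 W t := by
    obtain ⟨t₀, ht₀⟩ := h𝒩.exists_subset_chain_of_isCompact he hW L.2.1 hLW
    exact eventually_atTop.2 ⟨t₀, fun t ht => ht₀.trans (chain_mono ht)⟩
  have hhit : ∀ v ∈ 𝒱, ∀ᶠ t in atTop, (L.1 ∩ Q v ∩ chain e 𝒩 (v ∩ W) t).Nonempty := by
    intro v hv
    obtain ⟨x, hxL, hxQ⟩ := hLQ v hv
    obtain ⟨t₀, ht₀⟩ := h𝒩.exists_mem_chain he ((h𝒱o v hv).inter hW) (hQ v hv hxQ)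
    exact eventually_atTop.2 ⟨t₀, fun t ht => ⟨x, ⟨hxL, hxQ⟩, chain_mono ht ht₀⟩⟩
  exact (hcover.and ((eventually_all_finite h𝒱).2 hhit)).exists

theorem IsPytkeevNetwork.isNetwork_hyperspaceNetwork :
    IsNetwork (hyperspaceNetwork (finiteUnions 𝒩)) := by
  intro 𝒦 𝒪 h𝒪 h𝒦
  obtain ⟨W, 𝒱, hW, h𝒱, h𝒱o, h𝒦W, hsub⟩ := exists_vietorisBasic_subset h𝒪 h𝒦
  obtain ⟨t, ht⟩ := h𝒩.exists_mem_chainBasic he hW h𝒱 h𝒱o (Q := fun v => v ∩ W)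
    (fun _ _ => subset_rfl) h𝒦W.1 fun v hv => by
      obtain ⟨x, hxK, hxv⟩ := h𝒦W.2 v hv
      exact ⟨x, hxK, hxv, h𝒦W.1 hxK⟩
  obtain ⟨𝒩', h𝒩', h𝒩't, h𝒩'W⟩ := exists_hyperspaceNetwork_between h𝒱 t
  exact ⟨𝒩', h𝒩', h𝒩't ht, h𝒩'W.trans hsub⟩

theorem IsPytkeevNetwork.not_accumulatesAt_of_witnesses {𝒦 : NonemptyCompactSubsets X}
    {𝒜 : Set (NonemptyCompactSubsets X)} {D : ℕ → Set (NonemptyCompactSubsets X)}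
    (hD : ∀ t, (𝒜 ∩ D t).Finite) {T : Set (Set X × Set X)} (hT : T.Finite)
    (hTU : ∀ P ∈ T, IsOpen P.1 ∧ P.2 ⊆ P.1 ∧ closure P.2 ∩ 𝒦.1 ⊆ P.1)
    (hwit : ∀ L ∈ 𝒜, ∃ P ∈ T, ∃ x ∈ L.1 ∩ P.2, ∀ s, x ∈ chain e 𝒩 P.1 s → L ∈ D s) :
    ¬AccumulatesAt 𝒜 𝒦 := fun h𝒜 => by
  have : Nonempty X := ⟨𝒦.2.2.some⟩
  choose! τ hτT x hx hxD using hwit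
  obtain ⟨P, hPT, hP⟩ := h𝒜.exists_inter_preimage hT hτT
  obtain ⟨hPo, hP21, hPK⟩ := hTU P hPT
  have hxP : MapsTo x (𝒜 ∩ τ ⁻¹' {P}) P.2 := fun L ⟨hL, hτL⟩ => hτL ▸ (hx L hL).2
  have hfin : ∀ t, {L ∈ 𝒜 ∩ τ ⁻¹' {P} | x L ∈ chain e 𝒩 P.1 t}.Finite := fun t =>
    (hD t).subset fun L ⟨⟨hL, hτL⟩, hxL⟩ => ⟨hL, hxD L hL t (hτL ▸ hxL)⟩
  obtain ⟨y, hyK, hy⟩ := hP.exists_accumulatesAt_image (fun L hL => (hx L hL.1).1)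
    (h𝒩.finite_fiber he hPo (hxP.mono_right hP21) hfin)
  have hyP : y ∈ closure P.2 := closure_mono (image_subset_iff.2 hxP) hy.mem_closure
  exact h𝒩.not_accumulatesAt_image he hPo hfin (hPK ⟨hyP, hyK⟩) hy

theorem IsPytkeevNetwork.exists_hyperspaceNetwork_inter_infinite [T2Space X] (hW : IsOpen W)
    (h𝒱 : 𝒱.Finite) (h𝒱o : ∀ v ∈ 𝒱, IsOpen v) {𝒦 : NonemptyCompactSubsets X}
    (h𝒦 : 𝒦 ∈ vietorisBasic W 𝒱) {𝒜 : Set (NonemptyCompactSubsets X)}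
    (h𝒜 : AccumulatesAt 𝒜 𝒦) :
    ∃ 𝒩' ∈ hyperspaceNetwork (finiteUnions 𝒩), 𝒩' ⊆ vietorisBasic W 𝒱 ∧ (𝒩' ∩ 𝒜).Infinite := by
  have hQ : ∀ v ∈ 𝒱, ∃ Q, IsOpen Q ∧ Q ⊆ v ∩ W ∧ (𝒦.1 ∩ Q).Nonempty ∧
      closure Q ∩ 𝒦.1 ⊆ v ∩ W := by
    intro v hv
    obtain ⟨x, hxK, hxv⟩ := h𝒦.2 v hv
    obtain ⟨Q, hQo, hQ, hxQ, hQK⟩ :=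
      𝒦.2.1.exists_isOpen_closure_inter_subset ((h𝒱o v hv).inter hW) ⟨hxK, hxv, h𝒦.1 hxK⟩
    exact ⟨Q, hQo, hQ, ⟨x, hxK, hxQ⟩, hQK⟩
  choose! Q hQo hQ hKQ hQK using hQ
  by_contra! hfin
  have hD : ∀ t, (𝒜 ∩ chainBasic e 𝒩 W 𝒱 Q t).Finite := fun t => by
    obtain ⟨𝒩', h𝒩', h𝒩't, h𝒩'W⟩ := exists_hyperspaceNetwork_between (Q := Q) h𝒱 t
    exact (hfin 𝒩' h𝒩' h𝒩'W).subset fun L ⟨hL, hLt⟩ => ⟨h𝒩't hLt, hL⟩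
  have hnhds : vietorisBasic W (Q '' 𝒱) ∈ 𝓝 𝒦 :=
    (isOpen_vietorisBasic hW (h𝒱.image Q) (forall_mem_image.2 hQo)).mem_nhds
      ⟨h𝒦.1, forall_mem_image.2 hKQ⟩
  have h𝒜' : AccumulatesAt ((𝒜 ∩ vietorisBasic W (Q '' 𝒱)) \ chainBasic e 𝒩 W 𝒱 Q 0) 𝒦 :=
    (h𝒜.inter_mem_nhds hnhds).diff_of_finite_inter
      ((hD 0).subset (inter_subset_inter_left _ inter_subset_left))
  refine h𝒩.not_accumulatesAt_of_witnesses he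
    (fun t => (hD t).subset (inter_subset_inter_left _ (sdiff_subset.trans inter_subset_left)))
    ((h𝒱.image fun v => (v ∩ W, Q v)).insert (W, W)) ?_ ?_ h𝒜'
  · rintro _ (rfl | ⟨v, hv, rfl⟩)
    · exact ⟨hW, subset_rfl, inter_subset_right.trans h𝒦.1⟩
    · exact ⟨(h𝒱o v hv).inter hW, hQ v hv, hQK v hv⟩
  · rintro L ⟨⟨-, hLW, hLQ⟩, hL0⟩
    replace hLQ : ∀ v ∈ 𝒱, (L.1 ∩ Q v).Nonempty := fun v hv => hLQ _ (mem_image_of_mem Q hv)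
    obtain ⟨t, hLt, hLt'⟩ := Nat.exists_not_and_succ_of_not_zero_of_exists hL0
      (h𝒩.exists_mem_chainBasic he hW h𝒱 h𝒱o hQ hLW hLQ)
    obtain ⟨P, hP, x, hx, hxt⟩ := exists_witness_of_notMem_chainBasic hLW hLQ hLt
    exact ⟨P, hP, x, hx, fun s hs => chainBasic_mono
      (Nat.succ_le_of_lt (lt_of_not_ge fun hst => hxt (chain_mono hst hs))) hLt'⟩

theorem IsPytkeevNetwork.hyperspaceNetwork [T2Space X] :
    IsPytkeevNetwork (hyperspaceNetwork (finiteUnions 𝒩)) := by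
  refine ⟨h𝒩.isNetwork_hyperspaceNetwork he, fun 𝒦 𝒪 h𝒪 h𝒦 𝒜 h𝒜 => ?_⟩
  obtain ⟨W, 𝒱, hW, h𝒱, h𝒱o, h𝒦W, hsub⟩ := exists_vietorisBasic_subset h𝒪 h𝒦
  obtain ⟨𝒩', h𝒩', h𝒩'W, hinf⟩ :=
    h𝒩.exists_hyperspaceNetwork_inter_infinite he hW h𝒱 h𝒱o h𝒦W h𝒜
  exact ⟨𝒩', h𝒩', h𝒩'W.trans hsub, hinf⟩

end Hyperspace

/-- If a Hausdorff space `X` has a countable Pytkeev network, then its hyperspace of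
nonempty compact subsets with the Vietoris topology has a countable Pytkeev network. -/
theorem hyperspace_countable_pytkeevNetwork {X : Type*} [TopologicalSpace X] [T2Space X]
    (h : ∃ 𝒩 : Set (Set X), 𝒩.Countable ∧ IsPytkeevNetwork 𝒩) :
    ∃ 𝒩 : Set (Set (NonemptyCompactSubsets X)), 𝒩.Countable ∧
      @IsPytkeevNetwork (NonemptyCompactSubsets X) (vietorisTopology X) 𝒩 := by
  obtain ⟨𝒩, h𝒩c, h𝒩⟩ := h
  obtain ⟨e, he⟩ := countable_iff_exists_subset_range.1 h𝒩c
  exact ⟨hyperspaceNetwork (finiteUnions 𝒩), h𝒩c.finiteUnions.hyperspaceNetwork,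
    h𝒩.hyperspaceNetwork he⟩
end

section
/- If G is a precompact (totally bounded) topological group with a countable Pytkeev network, then G is metrizable and separable. -/
open Set Filter Topology TopologicalSpace

/-!
Separability only needs a countable network, and a `T₀` group is metrizable as soon as `𝓝 1` is
countably generated. If the interiors of the closures of the members of `𝒩` form a π-base at `1`,
the sets `P / P` built from them form a countable base at `1`. Otherwise some neighbourhood `U`
of `1` is such that all members of `𝒩` inside `U` are nowhere dense. Choosing the terms of a
sequence one at a time, away from finitely many nowhere dense translates, gives an infinite set
`D` such that `D⁻¹ * D` meets each of these members in a finite set. Precompactness makes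
`D⁻¹ * D` accumulate at `1`, and this contradicts the Pytkeev property.
-/

open Pointwise

theorem IsNetwork.separableSpace {X : Type*} [TopologicalSpace X] {𝒩 : Set (Set X)}
    (h𝒩 : IsNetwork 𝒩) (hc : 𝒩.Countable) : SeparableSpace X := by
  choose p hp using fun N : {N : Set X | N ∈ 𝒩 ∧ N.Nonempty} => N.2.2
  have : Countable {N : Set X | N ∈ 𝒩 ∧ N.Nonempty} := (hc.mono fun _ hN => hN.1).to_subtype
  refine ⟨⟨range p, countable_range p, dense_iff_inter_open.2 fun U hU ⟨x, hx⟩ => ?_⟩⟩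
  obtain ⟨N, hN, hxN, hNU⟩ := h𝒩 x U hU hx
  exact ⟨_, hNU (hp ⟨N, hN, x, hxN⟩), mem_range_self _⟩

theorem exists_seq_notMem_of_monotone {α : Type*} (R : ℕ → α → Set α)
    (hR : ∀ x, Monotone (R · x)) (h : ∀ n (s : Set α), s.Finite → ∃ y, ∀ x ∈ s, y ∉ R n x) :
    ∃ d : ℕ → α, ∀ m n, m < n → d n ∉ R n (d m) := by
  classical
  obtain ⟨f, -, hf⟩ := exists_seq_of_forall_finset_exists (fun _ : ℕ × α => True)
    (fun p q => p.1 < q.1 ∧ q.2 ∉ R q.1 p.2) fun s _ => by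
      obtain ⟨y, hy⟩ := h (s.sup Prod.fst + 1) (Prod.snd '' (s : Set (ℕ × α)))
        (s.finite_toSet.image _)
      exact ⟨(s.sup Prod.fst + 1, y), trivial, fun p hp =>
        ⟨Nat.lt_succ_of_le (Finset.le_sup hp), hy _ (mem_image_of_mem _ hp)⟩⟩
  -- the index paired with the `n`-th term is at least `n`
  have hmono : StrictMono fun n => (f n).1 := fun m n hmn => (hf m n hmn).1
  exact ⟨fun n => (f n).2, fun m n hmn hmem => (hf m n hmn).2 (hR _ (hmono.id_le n) hmem)⟩

section NowhereDense

variable {X : Type*} [TopologicalSpace X]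

theorem IsNowhereDense.union {s t : Set X} (hs : IsNowhereDense s) (ht : IsNowhereDense t) :
    IsNowhereDense (s ∪ t) := by
  rwa [IsNowhereDense, closure_union, interior_union_isClosed_of_interior_empty isClosed_closure ht]

theorem Set.Finite.isNowhereDense_biUnion {ι : Type*} {s : Set ι} (hs : s.Finite) {f : ι → Set X}
    (hf : ∀ i ∈ s, IsNowhereDense (f i)) : IsNowhereDense (⋃ i ∈ s, f i) := by
  induction s, hs using Set.Finite.induction_on with
  | empty => simp [isNowhereDense_empty]
  | insert _ _ ih =>
    rw [biUnion_insert]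
    exact (hf _ (mem_insert _ _)).union (ih fun i hi => hf i (mem_insert_of_mem _ hi))

theorem IsNowhereDense.compl_nonempty [Nonempty X] {s : Set X} (hs : IsNowhereDense s) :
    sᶜ.Nonempty :=
  nonempty_compl.2 fun h => by simp [IsNowhereDense, h] at hs

theorem IsNowhereDense.smul {G : Type*} [Group G] [MulAction G X] [ContinuousConstSMul G X]
    {s : Set X} (hs : IsNowhereDense s) (g : G) : IsNowhereDense (g • s) := by
  rw [← image_smul]
  exact (Homeomorph.smul g).isInducing.isNowhereDense_image hs

theorem IsNowhereDense.inv [InvolutiveInv X] [ContinuousInv X] {s : Set X}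
    (hs : IsNowhereDense s) : IsNowhereDense s⁻¹ := by
  rw [← image_inv_eq_inv]
  exact (Homeomorph.inv X).isInducing.isNowhereDense_image hs

end NowhereDense

section TopologicalGroup

variable {G : Type*} [Group G] [TopologicalSpace G] [IsTopologicalGroup G]

theorem IsTopologicalGroup.metrizableSpace_of_isCountablyGenerated [T0Space G]
    [(𝓝 (1 : G)).IsCountablyGenerated] : MetrizableSpace G := by
  let := IsTopologicalGroup.rightUniformSpace G
  have : (uniformity G).IsCountablyGenerated := comap.isCountablyGenerated _ _
  exact UniformSpace.metrizableSpace

theorem isCountablyGenerated_nhds_one_of_countable_piBase {ℬ : Set (Set G)} (hc : ℬ.Countable)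
    (hopen : ∀ P ∈ ℬ, IsOpen P) (hℬ : ∀ U ∈ 𝓝 (1 : G), ∃ P ∈ ℬ, P.Nonempty ∧ P ⊆ U) :
    (𝓝 (1 : G)).IsCountablyGenerated := by
  refine HasCountableBasis.isCountablyGenerated (p := fun P => P ∈ ℬ ∧ P / P ∈ 𝓝 (1 : G))
    ⟨⟨fun t => ⟨fun ht => ?_, fun ⟨P, hP, hPt⟩ => mem_of_superset hP.2 hPt⟩⟩,
      hc.mono fun _ hP => hP.1⟩
  obtain ⟨V, hV, hVt⟩ := exists_nhds_split_inv ht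
  obtain ⟨P, hP, ⟨x, hx⟩, hPV⟩ := hℬ V hV
  refine ⟨P, ⟨hP, (hopen P hP).div_right.mem_nhds ⟨x, hx, x, hx, div_self' x⟩⟩, ?_⟩
  rintro _ ⟨a, ha, b, hb, rfl⟩
  exact hVt a (hPV ha) b (hPV hb)

theorem accumulatesAt_inv_mul_self
    (hpre : ∀ U ∈ 𝓝 (1 : G), ∃ F : Set G, F.Finite ∧ ∀ g : G, ∃ f ∈ F, ∃ u ∈ U, g = f * u)
    {D : Set G} (hD : D.Infinite) : AccumulatesAt (D⁻¹ * D) 1 := by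
  intro U hU
  obtain ⟨V, hV, hVU⟩ := exists_nhds_split_inv hU
  obtain ⟨F, hF, hcover⟩ := hpre V⁻¹ (inv_mem_nhds_one G hV)
  obtain ⟨f, -, hf⟩ : ∃ f ∈ F, (D ∩ f • V⁻¹).Infinite := by
    by_contra! hfin
    refine hD ((hF.biUnion hfin).subset fun g hg => ?_)
    obtain ⟨f, hf, u, hu, rfl⟩ := hcover g
    exact mem_biUnion hf ⟨hg, u, hu, rfl⟩
  obtain ⟨a, haD, v, hv, rfl⟩ := hf.nonempty
  refine (hf.image (mul_right_injective (f • v)⁻¹).injOn).mono ?_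
  rintro _ ⟨b, ⟨hbD, w, hw, rfl⟩, rfl⟩
  refine ⟨?_, mem_mul.2 ⟨(f • v)⁻¹, inv_mem_inv.2 haD, f • w, hbD, rfl⟩⟩
  simpa [smul_eq_mul, mul_assoc] using hVU _ hv _ hw

theorem exists_seq_inv_mul_notMem {S : ℕ → Set G} (hS : Monotone S)
    (hnd : ∀ n, IsNowhereDense (S n)) : ∃ d : ℕ → G, ∀ m n, m < n → (d m)⁻¹ * d n ∉ S n := by
  obtain ⟨d, hd⟩ := exists_seq_notMem_of_monotone (fun n x => x • S n)
    (fun _ _ _ hmn => smul_set_mono (hS hmn)) fun n s hs => by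
      obtain ⟨y, hy⟩ := (hs.isNowhereDense_biUnion fun x _ => (hnd n).smul x).compl_nonempty
      exact ⟨y, fun x hx hyx => hy (mem_biUnion hx hyx)⟩
  exact ⟨d, fun m n hmn h => hd m n hmn (mem_smul_set_iff_inv_smul_mem.2 h)⟩

theorem exists_infinite_forall_finite_inter_inv_mul {e : ℕ → Set G}
    (he : ∀ k, IsNowhereDense (e k)) (h1 : IsNowhereDense ({1} : Set G)) :
    ∃ D : Set G, D.Infinite ∧ ∀ k, (e k ∩ (D⁻¹ * D)).Finite := by
  -- `1 ∈ S n` makes the sequence injective, and the inverses make the avoidance symmetric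
  set S : ℕ → Set G := fun n => {1} ∪ ⋃ k ∈ Iic n, (e k ∪ (e k)⁻¹)
  have hS : Monotone S := fun m n hmn =>
    union_subset_union_right _ (biUnion_subset_biUnion_left (Iic_subset_Iic.2 hmn))
  obtain ⟨d, hd⟩ := exists_seq_inv_mul_notMem hS fun n =>
    h1.union ((finite_Iic n).isNowhereDense_biUnion fun k _ => (he k).union (he k).inv)
  have hinj : Function.Injective d := by
    intro m n hmn
    by_contra hne
    rcases lt_or_gt_of_ne hne with h | h
    · exact hd m n h (by simp [S, hmn])
    · exact hd n m h (by simp [S, hmn])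
  have hsmall : ∀ k m n, m ≠ n → (d m)⁻¹ * d n ∈ e k → m < k ∧ n < k := by
    intro k m n hmn hk
    rcases lt_or_gt_of_ne hmn with h | h
    · have : n < k := by
        by_contra! hkn
        exact hd m n h (Or.inr (mem_biUnion (mem_Iic.2 hkn) (Or.inl hk)))
      exact ⟨h.trans this, this⟩
    · have : m < k := by
        by_contra! hkm
        exact hd n m h (Or.inr (mem_biUnion (mem_Iic.2 hkm) (Or.inr (by simpa using hk))))
      exact ⟨this, h.trans this⟩
  refine ⟨range d, infinite_range_of_injective hinj, fun k => ?_⟩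
  have hquot : (insert 1 ((fun p : ℕ × ℕ => (d p.1)⁻¹ * d p.2) '' Iio k ×ˢ Iio k)).Finite :=
    (((finite_Iio k).prod (finite_Iio k)).image _).insert 1
  refine hquot.subset ?_
  rintro _ ⟨hk, a, ⟨m, hm⟩, _, ⟨n, rfl⟩, rfl⟩
  obtain rfl : a = (d m)⁻¹ := by rw [hm, inv_inv]
  rcases eq_or_ne m n with rfl | hmn
  · simp
  · exact Or.inr ⟨(m, n), hsmall k m n hmn hk, rfl⟩

theorem IsPytkeevNetwork.isCountablyGenerated_nhds_one [RegularSpace G]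
    (hpre : ∀ U ∈ 𝓝 (1 : G), ∃ F : Set G, F.Finite ∧ ∀ g : G, ∃ f ∈ F, ∃ u ∈ U, g = f * u)
    {𝒩 : Set (Set G)} (hc : 𝒩.Countable) (h𝒩 : IsPytkeevNetwork 𝒩) :
    (𝓝 (1 : G)).IsCountablyGenerated := by
  by_cases hπ : ∀ U ∈ 𝓝 (1 : G), ∃ N ∈ 𝒩, (interior (closure N)).Nonempty ∧
      interior (closure N) ⊆ U
  · exact isCountablyGenerated_nhds_one_of_countable_piBase (hc.image _)
      (forall_mem_image.2 fun _ _ => isOpen_interior) (by simpa using hπ)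
  push Not at hπ
  obtain ⟨U, hU, hπU⟩ := hπ
  obtain ⟨V, hV, hVcl, hVU⟩ := exists_mem_nhds_isClosed_subset hU
  have hnd : ∀ N ∈ 𝒩, N ⊆ interior V → IsNowhereDense N := fun N hN hNV =>
    not_nonempty_iff_eq_empty.1 fun hne => hπU N hN hne
      (interior_subset.trans ((closure_minimal (hNV.trans interior_subset) hVcl).trans hVU))
  have h1V : (1 : G) ∈ interior V := mem_interior_iff_mem_nhds.2 hV
  obtain ⟨N₁, hN₁, h1N₁, hN₁V⟩ := h𝒩.1 1 _ isOpen_interior h1V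
  obtain ⟨e, he⟩ := (hc.mono (sep_subset 𝒩 (· ⊆ interior V))).exists_eq_range ⟨N₁, hN₁, hN₁V⟩
  obtain ⟨D, hD, hfin⟩ := exists_infinite_forall_finite_inter_inv_mul
    (fun k => hnd _ (he.ge (mem_range_self k)).1 (he.ge (mem_range_self k)).2)
    ((hnd N₁ hN₁ hN₁V).mono (singleton_subset_iff.2 h1N₁))
  obtain ⟨N, hN, hNV, hNA⟩ := h𝒩.2 1 _ isOpen_interior h1V _ (accumulatesAt_inv_mul_self hpre hD)
  obtain ⟨k, rfl⟩ : N ∈ range e := he ▸ ⟨hN, hNV⟩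
  exact (hNA (hfin k)).elim

end TopologicalGroup

/-- A precompact (totally bounded) topological group with a countable Pytkeev network
is metrizable and separable. -/
theorem precompactGroup_metrizable_separable {G : Type*} [Group G] [TopologicalSpace G]
    [IsTopologicalGroup G] [T3Space G]
    (hpre : ∀ U ∈ 𝓝 (1 : G), ∃ F : Set G, F.Finite ∧
      ∀ g : G, ∃ f ∈ F, ∃ u ∈ U, g = f * u)
    (h𝒩 : ∃ 𝒩 : Set (Set G), 𝒩.Countable ∧ IsPytkeevNetwork 𝒩) :
    MetrizableSpace G ∧ SeparableSpace G := by
  obtain ⟨𝒩, hc, h𝒩⟩ := h𝒩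
  have := h𝒩.isCountablyGenerated_nhds_one hpre hc
  exact ⟨IsTopologicalGroup.metrizableSpace_of_isCountablyGenerated, h𝒩.1.separableSpace hc⟩
end
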